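/- arXiv:2407.10609 — 8 statements merged into one kernel-verified Lean document; each statement's English description precedes it below -/
import Mathlib

section
/- Let S be an isometry on a Hilbert space H such that S*ⁿ → 0 strongly, and let T be a bounded operator with S* T S = T. Then for every x ∈ H, the sequence S*ⁿ T S ⁿ x equals T x for all n, and if additionally T = K* L where K, L satisfy S* K = K S and S* L = L S (Hankel-type intertwining), then T = 0. -/
/-!
Iterating `S* T S = T` gives `T = S*ⁿ T Sⁿ`. For `T = K* L`, the intertwining relations move the
powers of `S` across `K` and `L`: `⟪T x, y⟫ = ⟪L Sⁿ x, K Sⁿ y⟫ = ⟪S*ⁿ L x, S*ⁿ K y⟫`, and the right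
side tends to `⟪0, 0⟫ = 0` because `S*ⁿ → 0` strongly. Hence `⟪T x, y⟫ = 0` for all `x, y`.
-/

open ContinuousLinearMap Filter

theorem pow_mul_mul_pow_eq_of_mul_mul_eq {M : Type*} [Monoid M] {a b t : M} (h : a * t * b = t)
    (n : ℕ) : a ^ n * t * b ^ n = t := by
  induction n with
  | zero => simp
  | succ n ih =>
    calc a ^ (n + 1) * t * b ^ (n + 1) = a ^ n * (a * t * b) * b ^ n := by
          rw [pow_succ, pow_succ' b]
          simp only [mul_assoc]
      _ = t := by rw [h, ih]

section

variable {H : Type*} [NormedAddCommGroup H] [InnerProductSpace ℂ H] [CompleteSpace H]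

theorem inner_adjoint_pow_mul_mul_pow_apply (S T : H →L[ℂ] H) (n : ℕ) (x y : H) :
    inner ℂ ((adjoint S ^ n * T * S ^ n) x) y = inner ℂ (T ((S ^ n) x)) ((S ^ n) y) := by
  rw [← star_eq_adjoint, ← star_pow, star_eq_adjoint]
  simp only [mul_apply_eq_comp, adjoint_inner_left]

theorem inner_adjoint_mul_apply_pow_of_intertwining {S K L : H →L[ℂ] H}
    (hK : adjoint S * K = K * S) (hL : adjoint S * L = L * S) (n : ℕ) (x y : H) :
    inner ℂ ((adjoint K * L) ((S ^ n) x)) ((S ^ n) y) =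
      inner ℂ ((adjoint S ^ n) (L x)) ((adjoint S ^ n) (K y)) := by
  have hKn : K * S ^ n = adjoint S ^ n * K := (SemiconjBy.pow_right hK.symm n :)
  have hLn : L * S ^ n = adjoint S ^ n * L := (SemiconjBy.pow_right hL.symm n :)
  rw [mul_apply_eq_comp, adjoint_inner_left, ← mul_apply_eq_comp L, ← mul_apply_eq_comp K, hKn,
    hLn, mul_apply_eq_comp, mul_apply_eq_comp]

theorem adjoint_mul_eq_zero_of_adjoint_mul_mul_eq {S K L : H →L[ℂ] H}
    (hSstrong : ∀ x : H, Tendsto (fun n : ℕ => ((adjoint S) ^ n) x) atTop (nhds 0))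
    (hK : adjoint S * K = K * S) (hL : adjoint S * L = L * S)
    (hT : adjoint S * (adjoint K * L) * S = adjoint K * L) :
    adjoint K * L = 0 := by
  ext x
  refine ext_inner_right ℂ fun y => ?_
  have hconst : ∀ n : ℕ, inner ℂ ((adjoint S ^ n) (L x)) ((adjoint S ^ n) (K y)) =
      inner ℂ ((adjoint K * L) x) y := fun n => by
    rw [← inner_adjoint_mul_apply_pow_of_intertwining hK hL, ← inner_adjoint_pow_mul_mul_pow_apply,
      pow_mul_mul_pow_eq_of_mul_mul_eq hT]
  have hlim := (hSstrong (L x)).inner (𝕜 := ℂ) (hSstrong (K y))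
  simp only [hconst, inner_zero_left] at hlim
  rw [zero_apply, inner_zero_left]
  exact tendsto_nhds_unique tendsto_const_nhds hlim

end

theorem hankel_product_toeplitz_eq_zero_general {H : Type*} [NormedAddCommGroup H]
    [InnerProductSpace ℂ H] [CompleteSpace H] (S K L T : H →L[ℂ] H)
    (hSstrong : ∀ x : H, Tendsto (fun n : ℕ => ((adjoint S) ^ n) x) atTop (nhds 0))
    (hT : adjoint S * T * S = T)
    (hK : adjoint S * K = K * S) (hL : adjoint S * L = L * S)
    (hTKL : T = adjoint K * L) :
    (∀ (n : ℕ) (x : H), ((adjoint S) ^ n * T * S ^ n) x = T x) ∧ T = 0 := by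
  refine ⟨fun n x => by rw [pow_mul_mul_pow_eq_of_mul_mul_eq hT n], ?_⟩
  subst hTKL
  exact adjoint_mul_eq_zero_of_adjoint_mul_mul_eq hSstrong hK hL hT

theorem hankel_product_toeplitz_eq_zero {H : Type*} [NormedAddCommGroup H]
    [InnerProductSpace ℂ H] [CompleteSpace H] (S K L T : H →L[ℂ] H)
    (hS : adjoint S * S = 1)
    (hSstrong : ∀ x : H, Tendsto (fun n : ℕ => ((adjoint S) ^ n) x) atTop (nhds 0))
    (hT : adjoint S * T * S = T)
    (hK : adjoint S * K = K * S) (hL : adjoint S * L = L * S)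
    (hTKL : T = adjoint K * L) :
    (∀ (n : ℕ) (x : H), ((adjoint S) ^ n * T * S ^ n) x = T x) ∧ T = 0 :=
  hankel_product_toeplitz_eq_zero_general S K L T hSstrong hT hK hL hTKL
end

section
/- Let S be an isometry on a Hilbert space H with S*ⁿ → 0 in the strong operator topology, and let A : H →L[ℂ] H satisfy A = Sᵐ A S*ᵐ for all m ∈ ℕ. Then A = 0. -/
/-!
Since `S` is an isometry, so is every `S ^ m`, hence `‖A x‖ = ‖A (S*ᵐ x)‖ ≤ ‖A‖ ‖S*ᵐ x‖`,
and the right-hand side tends to zero.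
-/

open ContinuousLinearMap Filter

theorem ContinuousLinearMap.norm_pow_apply_of_adjoint_mul_self_eq_one {𝕜 E : Type*} [RCLike 𝕜]
    [NormedAddCommGroup E] [InnerProductSpace 𝕜 E] [CompleteSpace E] {S : E →L[𝕜] E}
    (hS : adjoint S * S = 1) (m : ℕ) (x : E) : ‖(S ^ m) x‖ = ‖x‖ :=
  (S ^ m).norm_map_iff_adjoint_comp_self.mpr
    (by rw [← star_eq_adjoint, star_pow, star_eq_adjoint]; exact pow_mul_pow_eq_one m hS) x

theorem ContinuousLinearMap.norm_comp_comp_apply_le_of_norm_map {𝕜 E F G K : Type*}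
    [NontriviallyNormedField 𝕜] [SeminormedAddCommGroup E] [SeminormedAddCommGroup F]
    [SeminormedAddCommGroup G] [SeminormedAddCommGroup K] [NormedSpace 𝕜 E] [NormedSpace 𝕜 F]
    [NormedSpace 𝕜 G] [NormedSpace 𝕜 K] {V : G →L[𝕜] K} (hV : ∀ y, ‖V y‖ = ‖y‖)
    (A : F →L[𝕜] G) (T : E →L[𝕜] F) (x : E) :
    ‖(V ∘L A ∘L T) x‖ ≤ ‖A‖ * ‖T x‖ :=
  (hV _).trans_le (A.le_opNorm _)

theorem eq_zero_of_shift_compression {H : Type*} [NormedAddCommGroup H]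
    [InnerProductSpace ℂ H] [CompleteSpace H] (S A : H →L[ℂ] H)
    (hS : adjoint S * S = 1)
    (hSstrong : ∀ x : H, Tendsto (fun n : ℕ => ‖((adjoint S) ^ n) x‖) atTop (nhds 0))
    (hA : ∀ m : ℕ, A = S ^ m * A * (adjoint S) ^ m) :
    A = 0 := by
  ext x
  have hbound : ∀ m : ℕ, ‖A x‖ ≤ ‖A‖ * ‖((adjoint S) ^ m) x‖ := fun m => by
    nth_rewrite 1 [hA m]
    exact norm_comp_comp_apply_le_of_norm_map
      (norm_pow_apply_of_adjoint_mul_self_eq_one hS m) _ _ x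
  have hlim : Tendsto (fun m : ℕ => ‖A‖ * ‖((adjoint S) ^ m) x‖) atTop (nhds 0) := by
    simpa using (hSstrong x).const_mul ‖A‖
  exact norm_le_zero_iff.mp (ge_of_tendsto' hlim hbound)
end

section
/- Let S be an isometry on a Hilbert space H and T a bounded operator with S* T S = T. If T is an isometry (T* T = I), then T commutes with S, i.e., S T = T S. -/
open ContinuousLinearMap

/-- The C⋆-identity turns `star (a - b) * (a - b) = 1 - 1 - 1 + 1 = 0` into `a = b`. -/
theorem CStarRing.eq_of_star_mul_eq_one {E : Type*} [NormedRing E] [StarRing E] [CStarRing E]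
    {a b : E} (ha : star a * a = 1) (hb : star b * b = 1) (hab : star a * b = 1) : a = b := by
  have hba : star b * a = 1 := by simpa using congrArg star hab
  have h : star (a - b) * (a - b) = 0 := by
    rw [star_sub, sub_mul, mul_sub, mul_sub, ha, hb, hab, hba]
    abel
  exact sub_eq_zero.mp ((CStarRing.star_mul_self_eq_zero_iff _).mp h)

theorem isometric_toeplitz_commutes {H : Type*} [NormedAddCommGroup H]
    [InnerProductSpace ℂ H] [CompleteSpace H] (S T : H →L[ℂ] H)
    (hS : adjoint S * S = 1)
    (hT : adjoint S * T * S = T)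
    (hTiso : adjoint T * T = 1) :
    S * T = T * S := by
  simp only [← star_eq_adjoint] at hS hT hTiso
  refine CStarRing.eq_of_star_mul_eq_one ?_ ?_ ?_ <;> rw [star_mul]
  · calc star T * star S * (S * T) = star T * (star S * S) * T := by noncomm_ring
      _ = 1 := by rw [hS, mul_one, hTiso]
  · calc star S * star T * (T * S) = star S * (star T * T) * S := by noncomm_ring
      _ = 1 := by rw [hTiso, mul_one, hS]
  · calc star T * star S * (T * S) = star T * (star S * T * S) := by noncomm_ring
      _ = 1 := by rw [hT, hTiso]
end

section
/- Let S be an isometry on a Hilbert space H and T a bounded operator satisfying S* T S = T. If T is a partial isometry (T T* T = T), then the range of T* is invariant under S, i.e., S (ran T*) ⊆ closure of ran T*. -/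
open ContinuousLinearMap

local notation "⟪" x ", " y "⟫" => @inner ℂ _ _ x y

theorem range_adjoint_invariant {H : Type*} [NormedAddCommGroup H]
    [InnerProductSpace ℂ H] [CompleteSpace H] (S T : H →L[ℂ] H)
    (hS : adjoint S * S = 1)
    (hT : adjoint S * T * S = T)
    (hTpi : T * adjoint T * T = T) :
    ∀ x ∈ LinearMap.range (adjoint T : H →ₗ[ℂ] H), S x ∈
      (LinearMap.range (adjoint T : H →ₗ[ℂ] H) : Submodule ℂ H).topologicalClosure := by
  -- helper: equal self-inner-products give equal norms
  have normeq : ∀ a b : H, ⟪a, a⟫ = ⟪b, b⟫ → ‖a‖ = ‖b‖ := by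
    intro a b h
    have := congrArg (RCLike.re (K := ℂ)) h
    rw [inner_self_eq_norm_sq (𝕜 := ℂ), inner_self_eq_norm_sq (𝕜 := ℂ)] at this
    nlinarith [norm_nonneg a, norm_nonneg b]
  -- helper: contraction estimate from ⟪a,a⟫ = ⟪b,c⟫ with ‖b‖ = ‖a‖
  have contr : ∀ a b c : H, ⟪a, a⟫ = ⟪b, c⟫ → ‖b‖ = ‖a‖ → ‖a‖ ≤ ‖c‖ := by
    intro a b c h hb
    have h2 : ‖a‖ ^ 2 ≤ ‖a‖ * ‖c‖ := by
      have := congrArg (RCLike.re (K := ℂ)) h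
      rw [inner_self_eq_norm_sq (𝕜 := ℂ)] at this
      calc ‖a‖ ^ 2 = RCLike.re (⟪b, c⟫) := this
        _ ≤ ‖(⟪b, c⟫)‖ := RCLike.re_le_norm _
        _ ≤ ‖b‖ * ‖c‖ := norm_inner_le_norm _ _
        _ = ‖a‖ * ‖c‖ := by rw [hb]
    rcases eq_or_lt_of_le (norm_nonneg a) with h0 | h0
    · rw [← h0]; exact norm_nonneg c
    · nlinarith
  -- pointwise versions
  have hTpi' : ∀ w, T (adjoint T (T w)) = T w := by
    intro w
    have := congrArg (fun A : H →L[ℂ] H => A w) hTpi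
    simpa [mul_apply] using this
  have hT' : ∀ w, adjoint S (T (S w)) = T w := by
    intro w
    have := congrArg (fun A : H →L[ℂ] H => A w) hT
    simpa [mul_apply] using this
  have hS' : ∀ w, adjoint S (S w) = w := by
    intro w
    have := congrArg (fun A : H →L[ℂ] H => A w) hS
    simpa [mul_apply] using this
  -- S is isometric
  have hSnorm : ∀ w : H, ‖S w‖ = ‖w‖ := by
    intro w
    refine normeq _ _ ?_
    rw [← adjoint_inner_left, hS' w]
  -- adjoint S is a contraction
  have hSadj : ∀ w : H, ‖adjoint S w‖ ≤ ‖w‖ := by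
    intro w
    exact contr _ _ _ (adjoint_inner_right S (adjoint S w) w) (hSnorm _)
  -- ‖adjoint T (T w)‖ = ‖T w‖
  have hTTnorm : ∀ w : H, ‖adjoint T (T w)‖ = ‖T w‖ := by
    intro w
    refine normeq _ _ ?_
    rw [adjoint_inner_left, hTpi' w]
  -- T is a contraction
  have hTnorm : ∀ w : H, ‖T w‖ ≤ ‖w‖ := by
    intro w
    exact contr _ _ _ (adjoint_inner_left T w (T w)).symm (hTTnorm _)
  -- adjoint T (T (adjoint T w)) = adjoint T w
  have hT3 : ∀ w : H, adjoint T (T (adjoint T w)) = adjoint T w := by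
    intro w
    apply ext_inner_right ℂ
    intro v
    calc ⟪adjoint T (T (adjoint T w)), v⟫
        = ⟪T (adjoint T w), T v⟫ := adjoint_inner_left T v (T (adjoint T w))
      _ = ⟪adjoint T w, adjoint T (T v)⟫ := (adjoint_inner_right T (adjoint T w) (T v)).symm
      _ = ⟪w, T (adjoint T (T v))⟫ := adjoint_inner_left T (adjoint T (T v)) w
      _ = ⟪w, T v⟫ := by rw [hTpi' v]
      _ = ⟪adjoint T w, v⟫ := (adjoint_inner_left T v w).symm
  -- ‖T (adjoint T y)‖ = ‖adjoint T y‖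
  have hTx : ∀ w : H, ‖T (adjoint T w)‖ = ‖adjoint T w‖ := by
    intro w
    refine normeq _ _ ?_
    calc ⟪T (adjoint T w), T (adjoint T w)⟫
        = ⟪adjoint T w, adjoint T (T (adjoint T w))⟫ :=
          (adjoint_inner_right T (adjoint T w) (T (adjoint T w))).symm
      _ = ⟪adjoint T w, adjoint T w⟫ := by rw [hT3 w]
  rintro x ⟨y, rfl⟩
  set x := adjoint T y with hx
  -- ‖T (S x)‖ = ‖S x‖
  have key : ‖T (S x)‖ = ‖S x‖ := by
    have h1 : ‖x‖ ≤ ‖T (S x)‖ := by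
      calc ‖x‖ = ‖T x‖ := (hTx y).symm
        _ = ‖adjoint S (T (S x))‖ := by rw [hT' x]
        _ ≤ ‖T (S x)‖ := hSadj _
    have h2 : ‖T (S x)‖ ≤ ‖S x‖ := hTnorm _
    rw [hSnorm] at h2 ⊢
    linarith
  -- now show S x = adjoint T (T (S x))
  have heq : S x = adjoint T (T (S x)) := by
    have hzero : ⟪S x - adjoint T (T (S x)), S x - adjoint T (T (S x))⟫ = 0 := by
      have e1 : ⟪S x, adjoint T (T (S x))⟫ = ⟪T (S x), T (S x)⟫ := by
        rw [adjoint_inner_right]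
      have e2 : ⟪adjoint T (T (S x)), S x⟫ = ⟪T (S x), T (S x)⟫ := by
        rw [adjoint_inner_left]
      have e3 : ⟪adjoint T (T (S x)), adjoint T (T (S x))⟫ = ⟪T (S x), T (S x)⟫ := by
        rw [adjoint_inner_left, hTpi', ← adjoint_inner_left]
      have e4 : ⟪S x, S x⟫ = ⟪T (S x), T (S x)⟫ := by
        rw [inner_self_eq_norm_sq_to_K, inner_self_eq_norm_sq_to_K, key]
      rw [inner_sub_sub_self, e1, e2, e3, e4]
      ring
    exact (sub_eq_zero.mp (inner_self_eq_zero.mp hzero))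
  exact Submodule.le_topologicalClosure _ ⟨T (S x), heq.symm⟩
end

section
/- Let S₁, S₂ be doubly commuting isometries on H (S₁ S₂ = S₂ S₁ and S₁* S₂ = S₂ S₁*) and T a partial isometry with Sᵢ* T Sᵢ = T for i = 1, 2, satisfying S Tᵢ-type relations Sᵢ T* T = T* Sᵢ T and Sᵢ T T* = T Sᵢ T*. Then S₁* T T* S₁ S₂* T T* S₂ = T T* = S₂* T T* S₂ S₁* T T* S₁. -/
/-!
Write `P = T T*`. Pushing `S₁` past `S₂*` (double commutation) and `T T*` past `S₂*` turns the
middle of `S₁* P S₁ S₂* P S₂` into `T* S₁ T T* = S₁ T*`, which holds because `T` is a partial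
isometry; the invariances `Sᵢ* T Sᵢ = T` then collapse what is left to `P`. The argument takes
place in an arbitrary monoid with involution, and the second identity is the first with the
roles of `S₁` and `S₂` exchanged.
-/

open ContinuousLinearMap

section StarMonoid

variable {R : Type*} [Monoid R] [StarMul R] {S U T : R}

theorem star_mul_self_mul_star_of_mul_star_mul_self (hT : T * star T * T = T) :
    star T * T * star T = star T := by
  simpa only [star_mul, star_star, mul_assoc] using congrArg star hT

theorem star_mul_mul_mul_star_self (hT : T * star T * T = T)
    (hS : S * (star T * T) = star T * (S * T)) :
    star T * S * (T * star T) = S * star T :=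
  calc star T * S * (T * star T) = star T * (S * T) * star T := by simp only [mul_assoc]
    _ = S * (star T * T * star T) := by rw [← hS]; simp only [mul_assoc]
    _ = S * star T := by rw [star_mul_self_mul_star_of_mul_star_mul_self hT]

theorem mul_star_mul_star_comm (hU : U * (T * star T) = T * (U * star T)) :
    T * star T * star U = T * star U * star T := by
  simpa only [star_mul, star_star, mul_assoc] using congrArg star hU

theorem star_mul_star_mul_of_star_mul_mul (hU : star U * T * U = T) :
    star U * star T * U = star T := by
  simpa only [star_mul, star_star, mul_assoc] using congrArg star hU

theorem compression_mul_compression_eq_mul_star_self (hSU : Commute (star U) S)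
    (hT : T * star T * T = T) (hTS : star S * T * S = T) (hTU : star U * T * U = T)
    (hS : S * (star T * T) = star T * (S * T)) (hU : U * (T * star T) = T * (U * star T)) :
    star S * (T * star T) * S * (star U * (T * star T) * U) = T * star T :=
  calc star S * (T * star T) * S * (star U * (T * star T) * U)
      = star S * T * star T * (S * star U) * T * star T * U := by simp only [mul_assoc]
    _ = star S * (T * star T * star U) * S * T * star T * U := by
        rw [← hSU.eq]; simp only [mul_assoc]
    _ = star S * T * star U * (star T * S * (T * star T)) * U := by
        rw [mul_star_mul_star_comm hU]; simp only [mul_assoc]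
    _ = star S * T * (star U * S) * star T * U := by
        rw [star_mul_mul_mul_star_self hT hS]; simp only [mul_assoc]
    _ = (star S * T * S) * (star U * star T * U) := by rw [hSU.eq]; simp only [mul_assoc]
    _ = T * star T := by rw [hTS, star_mul_star_mul_of_star_mul_mul hTU]

end StarMonoid

theorem doubly_commuting_compression_identity_general {H : Type*} [NormedAddCommGroup H]
    [InnerProductSpace ℂ H] [CompleteSpace H] (S₁ S₂ T : H →L[ℂ] H)
    (hdc : adjoint S₁ * S₂ = S₂ * adjoint S₁)
    (hTpi : T * adjoint T * T = T)
    (hT₁ : adjoint S₁ * T * S₁ = T) (hT₂ : adjoint S₂ * T * S₂ = T)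
    (h₁l : S₁ * (adjoint T * T) = adjoint T * (S₁ * T))
    (h₂l : S₂ * (adjoint T * T) = adjoint T * (S₂ * T))
    (h₁r : S₁ * (T * adjoint T) = T * (S₁ * adjoint T))
    (h₂r : S₂ * (T * adjoint T) = T * (S₂ * adjoint T)) :
    adjoint S₁ * (T * adjoint T) * S₁ * (adjoint S₂ * (T * adjoint T) * S₂) = T * adjoint T ∧
      T * adjoint T =
        adjoint S₂ * (T * adjoint T) * S₂ * (adjoint S₁ * (T * adjoint T) * S₁) := by
  simp only [← star_eq_adjoint] at *
  have h₁₂ : Commute (star S₁) S₂ := hdc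
  have h₂₁ : Commute (star S₂) S₁ := by simpa only [star_star] using h₁₂.star_star.symm
  exact ⟨compression_mul_compression_eq_mul_star_self h₂₁ hTpi hT₁ hT₂ h₁l h₂r,
    (compression_mul_compression_eq_mul_star_self h₁₂ hTpi hT₂ hT₁ h₂l h₁r).symm⟩

theorem doubly_commuting_compression_identity {H : Type*} [NormedAddCommGroup H]
    [InnerProductSpace ℂ H] [CompleteSpace H] (S₁ S₂ T : H →L[ℂ] H)
    (hS₁ : adjoint S₁ * S₁ = 1) (hS₂ : adjoint S₂ * S₂ = 1)
    (hcomm : S₁ * S₂ = S₂ * S₁) (hdc : adjoint S₁ * S₂ = S₂ * adjoint S₁)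
    (hTpi : T * adjoint T * T = T)
    (hT₁ : adjoint S₁ * T * S₁ = T) (hT₂ : adjoint S₂ * T * S₂ = T)
    (h₁l : S₁ * (adjoint T * T) = adjoint T * (S₁ * T))
    (h₂l : S₂ * (adjoint T * T) = adjoint T * (S₂ * T))
    (h₁r : S₁ * (T * adjoint T) = T * (S₁ * adjoint T))
    (h₂r : S₂ * (T * adjoint T) = T * (S₂ * adjoint T)) :
    adjoint S₁ * (T * adjoint T) * S₁ * (adjoint S₂ * (T * adjoint T) * S₂) = T * adjoint T ∧
      T * adjoint T =
        adjoint S₂ * (T * adjoint T) * S₂ * (adjoint S₁ * (T * adjoint T) * S₁) :=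
  doubly_commuting_compression_identity_general S₁ S₂ T hdc hTpi hT₁ hT₂ h₁l h₂l h₁r h₂r
end

section
/- Let T be a partial isometry on H that is hyponormal, i.e., T* T − T T* ≥ 0, and suppose T = A B* where A, B are isometries on H with ran T = ran A, ran T* = ran B. Then by the Douglas factorization there is a contraction Z with A = B Z, and Z is necessarily an isometry. -/
open ContinuousLinearMap

theorem douglas_factor_isometry {H : Type*} [NormedAddCommGroup H]
    [InnerProductSpace ℂ H] [CompleteSpace H] (A B : H →L[ℂ] H)
    (hA : adjoint A * A = 1) (hB : adjoint B * B = 1)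
    (hpi : (A * adjoint B) * adjoint (A * adjoint B) * (A * adjoint B) = A * adjoint B)
    (hle : ∀ h : H, (inner ℂ ((A * adjoint A) h) h : ℂ).re ≤
      (inner ℂ ((B * adjoint B) h) h : ℂ).re) :
    ∃ Z : H →L[ℂ] H, ‖Z‖ ≤ 1 ∧ A = B * Z ∧ adjoint Z * Z = 1 := by
  -- key: B B* A = A pointwise
  have hAA : ∀ x : H, adjoint A (A x) = x := fun x => by
    have := congrArg (fun T : H →L[ℂ] H => T x) hA
    simpa using this
  have hBB : ∀ x : H, adjoint B (B x) = x := fun x => by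
    have := congrArg (fun T : H →L[ℂ] H => T x) hB
    simpa using this
  have key : ∀ x : H, B (adjoint B (A x)) = A x := by
    intro x
    have h1 : (inner ℂ (A (adjoint A (A x))) (A x) : ℂ).re ≤
        (inner ℂ (B (adjoint B (A x))) (A x) : ℂ).re := by
      simpa [mul_apply] using hle (A x)
    have h2 : (inner ℂ (A x) (A x) : ℂ).re ≤
        (inner ℂ (B (adjoint B (A x))) (A x) : ℂ).re := by
      rwa [hAA x] at h1
    set u := A x
    set v := B (adjoint B u) with hv
    have hvu : (inner ℂ v u : ℂ) = inner ℂ (adjoint B u) (adjoint B u) := by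
      rw [hv, ← adjoint_inner_right]
    have hvv : (inner ℂ v v : ℂ) = inner ℂ (adjoint B u) (adjoint B u) := by
      rw [hv, ← adjoint_inner_left, hBB]
    have huv : (inner ℂ u v : ℂ) = inner ℂ (adjoint B u) (adjoint B u) := by
      rw [← inner_conj_symm, hvu, inner_conj_symm]
    have hnorm : ‖u - v‖ ^ 2 ≤ 0 := by
      have expand : (inner ℂ (u - v) (u - v) : ℂ) =
          inner ℂ u u - inner ℂ u v - inner ℂ v u + inner ℂ v v := by
        simp only [inner_sub_left, inner_sub_right]; ring
      have : (inner ℂ (u - v) (u - v) : ℂ) = inner ℂ u u - inner ℂ v u := by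
        rw [expand, huv, hvv, hvu]; ring
      have hre : ‖u - v‖ ^ 2 = (inner ℂ u u : ℂ).re - (inner ℂ v u : ℂ).re := by
        have := congrArg Complex.re this
        simpa [← inner_self_eq_norm_sq (𝕜 := ℂ)] using this
      rw [hre]
      linarith [h2]
    have : ‖u - v‖ = 0 := le_antisymm (by nlinarith [norm_nonneg (u - v)]) (norm_nonneg _)
    have := norm_eq_zero.mp this
    have := sub_eq_zero.mp this
    exact this.symm
  refine ⟨adjoint B * A, ?_, ?_, ?_⟩
  · -- norm bound
    refine opNorm_le_bound _ zero_le_one (fun x => ?_)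
    have hiso : ‖(adjoint B * A) x‖ = ‖x‖ := by
      have h1 : (inner ℂ ((adjoint B * A) x) ((adjoint B * A) x) : ℂ) = inner ℂ x x := by
        simp only [mul_apply_eq_comp]
        rw [← adjoint_inner_left, adjoint_adjoint, key, ← adjoint_inner_right, hAA]
      have := congrArg Complex.re h1
      have h2 : ‖(adjoint B * A) x‖ ^ 2 = ‖x‖ ^ 2 := by
        simpa [← inner_self_eq_norm_sq (𝕜 := ℂ)] using this
      nlinarith [norm_nonneg ((adjoint B * A) x), norm_nonneg x]
    rw [hiso, one_mul]
  · ext x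
    simp only [mul_apply_eq_comp]
    exact (key x).symm
  · ext x
    simp only [mul_apply_eq_comp, one_apply_eq_self]
    rw [show adjoint B * A = (adjoint B) ∘L A from rfl, adjoint_comp]
    simp only [coe_comp', Function.comp_apply, adjoint_adjoint]
    rw [key x, hAA]
end

section
/- Douglas's lemma (range inclusion form used): if A, B are bounded operators on a Hilbert space H with A A* ≤ B B*, then there exists a contraction Z (‖Z‖ ≤ 1) such that A = B Z. -/
open ContinuousLinearMap
open scoped NNReal

set_option maxHeartbeats 2000000 in
theorem douglas_lemma {H : Type*} [NormedAddCommGroup H]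
    [InnerProductSpace ℂ H] [CompleteSpace H] (A B : H →L[ℂ] H)
    (hle : ∀ h : H, (inner ℂ ((A * adjoint A) h) h : ℂ).re ≤
      (inner ℂ ((B * adjoint B) h) h : ℂ).re) :
    ∃ Z : H →L[ℂ] H, ‖Z‖ ≤ 1 ∧ A = B * Z := by
  classical
  -- Step 1: ‖A* h‖ ≤ ‖B* h‖
  have hAB : ∀ h : H, ‖adjoint A h‖ ≤ ‖adjoint B h‖ := by
    intro h
    have h1 : (inner ℂ ((A * adjoint A) h) h : ℂ).re = ‖adjoint A h‖ ^ 2 := by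
      have e1 : ((A * adjoint A) h) = A (adjoint A h) := rfl
      rw [e1, ← adjoint_inner_right]
      exact inner_self_eq_norm_sq (𝕜 := ℂ) (adjoint A h)
    have h2 : (inner ℂ ((B * adjoint B) h) h : ℂ).re = ‖adjoint B h‖ ^ 2 := by
      have e1 : ((B * adjoint B) h) = B (adjoint B h) := rfl
      rw [e1, ← adjoint_inner_right]
      exact inner_self_eq_norm_sq (𝕜 := ℂ) (adjoint B h)
    have h3 := hle h
    rw [h1, h2] at h3
    nlinarith [norm_nonneg (adjoint A h), norm_nonneg (adjoint B h)]
  -- well-definedness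
  have hkey : ∀ h₁ h₂ : H, adjoint B h₁ = adjoint B h₂ → adjoint A h₁ = adjoint A h₂ := by
    intro h₁ h₂ hB
    have h4 : ‖adjoint A h₁ - adjoint A h₂‖ ≤ ‖adjoint B h₁ - adjoint B h₂‖ := by
      rw [← map_sub, ← map_sub]; exact hAB _
    rw [hB, sub_self, norm_zero] at h4
    have h5 := le_antisymm h4 (norm_nonneg _)
    rwa [norm_eq_zero, sub_eq_zero] at h5
  set S : Submodule ℂ H := LinearMap.range ((adjoint B : H →L[ℂ] H) : H →ₗ[ℂ] H) with hS
  have hpick : ∀ x : S, adjoint B (Classical.choose x.2) = (x : H) := fun x =>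
    Classical.choose_spec x.2
  let T : S →ₗ[ℂ] H :=
    { toFun := fun x => adjoint A (Classical.choose x.2)
      map_add' := by
        intro x y
        change adjoint A _ = adjoint A _ + adjoint A _
        rw [← map_add]
        apply hkey
        rw [map_add, hpick, hpick, hpick]; rfl
      map_smul' := by
        intro c x
        change adjoint A _ = c • adjoint A _
        rw [← map_smul]
        apply hkey
        rw [map_smul, hpick, hpick]; rfl }
  have hT : ∀ x : S, ‖T x‖ ≤ 1 * ‖x‖ := by
    intro x
    have h6 : ‖T x‖ = ‖adjoint A (Classical.choose x.2)‖ := rfl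
    rw [h6, one_mul]
    calc ‖adjoint A (Classical.choose x.2)‖ ≤ ‖adjoint B (Classical.choose x.2)‖ := hAB _
      _ = ‖(x : H)‖ := by rw [hpick]
  let Tc : S →L[ℂ] H := T.mkContinuous 1 hT
  set K : Submodule ℂ H := S.topologicalClosure with hK
  let eL : S →ₗ[ℂ] K := Submodule.inclusion S.le_topologicalClosure
  let e : S →L[ℂ] K := eL.mkContinuous 1 (fun x => by
    rw [one_mul]; rfl)
  have h_dense : DenseRange e := by
    intro x
    rw [Metric.mem_closure_iff]
    intro ε hε
    have hx : (x : H) ∈ closure (S : Set H) := x.2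
    obtain ⟨y, hyS, hy⟩ := Metric.mem_closure_iff.mp hx ε hε
    refine ⟨e ⟨y, hyS⟩, ⟨⟨y, hyS⟩, rfl⟩, ?_⟩
    rw [Subtype.dist_eq]
    exact hy
  have h_bound : ∀ x : S, ‖x‖ ≤ ((1 : ℝ≥0) : ℝ) * ‖e x‖ := fun x => by
    rw [NNReal.coe_one, one_mul]; rfl
  have h_unif : IsUniformInducing e :=
    (ContinuousLinearMap.isUniformEmbedding_of_bound e h_bound).isUniformInducing
  let Z₁ : K →L[ℂ] H := Tc.extend e
  have hZ₁ : ‖Z₁‖ ≤ 1 := by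
    have h7 := Tc.opNorm_extend_le h_dense h_bound
    have hTc : ‖Tc‖ ≤ 1 := T.mkContinuous_norm_le zero_le_one hT
    calc ‖Z₁‖ ≤ ((1 : ℝ≥0) : ℝ) * ‖Tc‖ := h7
      _ ≤ 1 := by rw [NNReal.coe_one, one_mul]; exact hTc
  let P : H →L[ℂ] K := K.orthogonalProjectionOnto
  let Z' : H →L[ℂ] H := Z₁.comp P
  have hZ' : ‖Z'‖ ≤ 1 := by
    calc ‖Z'‖ ≤ ‖Z₁‖ * ‖P‖ := Z₁.opNorm_comp_le P
      _ ≤ 1 * 1 :=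
          mul_le_mul hZ₁ (Submodule.orthogonalProjectionOnto_norm_le K) (norm_nonneg P) zero_le_one
      _ = 1 := one_mul 1
  have hZ'B : ∀ h : H, Z' (adjoint B h) = adjoint A h := by
    intro h
    have hmem : adjoint B h ∈ S := ⟨h, rfl⟩
    have hmemK : adjoint B h ∈ K := S.le_topologicalClosure hmem
    have hP : P (adjoint B h) = ⟨adjoint B h, hmemK⟩ :=
      Subtype.ext (K.starProjection_eq_self_iff.mpr hmemK)
    have hEq : (⟨adjoint B h, hmemK⟩ : K) = e ⟨adjoint B h, hmem⟩ := rfl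
    have h8 : Z' (adjoint B h) = Z₁ (e ⟨adjoint B h, hmem⟩) := by
      show Z₁ (P (adjoint B h)) = _
      rw [hP, hEq]
    rw [h8]
    have h9 := Tc.extend_eq h_dense h_unif (⟨adjoint B h, hmem⟩ : S)
    rw [h9]
    exact hkey _ _ (hpick ⟨adjoint B h, hmem⟩)
  refine ⟨adjoint Z', ?_, ?_⟩
  · rw [LinearIsometryEquiv.norm_map]; exact hZ'
  · have hadj : adjoint A = Z'.comp (adjoint B) := by
      ext h; exact (hZ'B h).symm
    have h10 : A = adjoint (adjoint A) := (adjoint_adjoint A).symm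
    rw [h10, hadj, adjoint_comp, adjoint_adjoint]
    rfl
end

section
/- Let S be an isometry on H with S*ⁿ → 0 strongly, and let X be a unitary operator on H satisfying S* X S = X. Then X commutes with S and with S*: S X = X S and S* X = X S*. -/
open ContinuousLinearMap Filter

private lemma norm_map_of_iso {H : Type*} [NormedAddCommGroup H]
    [InnerProductSpace ℂ H] [CompleteSpace H] (A : H →L[ℂ] H)
    (hA : adjoint A * A = 1) (z : H) : ‖A z‖ = ‖z‖ := by
  have h := A.apply_norm_sq_eq_inner_adjoint_left (𝕜 := ℂ) z
  rw [show A.adjoint ∘L A = adjoint A * A from rfl, hA] at h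
  change ‖A z‖ ^ 2 = RCLike.re (inner ℂ z z) at h
  rw [inner_self_eq_norm_sq (𝕜 := ℂ)] at h
  nlinarith [norm_nonneg (A z), norm_nonneg z, h]

private lemma aux_comm {H : Type*} [NormedAddCommGroup H]
    [InnerProductSpace ℂ H] [CompleteSpace H] (S X : H →L[ℂ] H)
    (hS : adjoint S * S = 1) (hX : adjoint X * X = 1)
    (hT : adjoint S * X * S = X) : S * X = X * S := by
  ext x
  set y := X (S x) with hy
  have hSy : adjoint S y = X x := by
    have := congrArg (fun A => A x) hT
    simpa [mul_apply] using this
  -- norms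
  have hny : ‖y‖ = ‖x‖ := by
    rw [hy, norm_map_of_iso X hX, norm_map_of_iso S hS]
  have hnSy : ‖adjoint S y‖ = ‖x‖ := by
    rw [hSy, norm_map_of_iso X hX]
  have key : S (adjoint S y) = y := by
    have h0 : ‖y - S (adjoint S y)‖ ^ 2 = 0 := by
      have hre : RCLike.re (inner ℂ y (S (adjoint S y)) : ℂ) = ‖adjoint S y‖ ^ 2 := by
        rw [← adjoint_inner_left, inner_self_eq_norm_sq (𝕜 := ℂ)]
      have hnorm : ‖S (adjoint S y)‖ = ‖adjoint S y‖ := norm_map_of_iso S hS _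
      have := norm_sub_sq (𝕜 := ℂ) y (S (adjoint S y))
      rw [hre, hnorm, hny, hnSy] at this
      rw [this]; ring
    have := pow_eq_zero_iff (n := 2) (by norm_num) |>.mp h0
    rw [norm_eq_zero] at this
    exact (sub_eq_zero.mp this).symm
  show S (X x) = X (S x)
  rw [← hSy, key, hy]

theorem unitary_toeplitz_commutes {H : Type*} [NormedAddCommGroup H]
    [InnerProductSpace ℂ H] [CompleteSpace H] (S X : H →L[ℂ] H)
    (hS : adjoint S * S = 1)
    (hSstrong : ∀ x : H, Tendsto (fun n : ℕ => ‖((adjoint S) ^ n) x‖) atTop (nhds 0))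
    (hX₁ : adjoint X * X = 1) (hX₂ : X * adjoint X = 1)
    (hT : adjoint S * X * S = X) :
    S * X = X * S ∧ adjoint S * X = X * adjoint S := by
  have h1 : S * X = X * S := aux_comm S X hS hX₁ hT
  have hT' : adjoint S * adjoint X * S = adjoint X := by
    have h := congrArg star hT
    rw [star_mul, star_mul] at h
    simp only [star_eq_adjoint, adjoint_adjoint] at h
    rw [mul_assoc]
    exact h
  have h2 : S * adjoint X = adjoint X * S := aux_comm S (adjoint X) hS (by rwa [adjoint_adjoint]) hT'
  refine ⟨h1, ?_⟩
  have h := congrArg star h2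
  rw [star_mul, star_mul] at h
  simp only [star_eq_adjoint, adjoint_adjoint] at h
  exact h.symm
end
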